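/- There exists a constant C > 0, independent of α, L and A, such that for every x = (x₁,x₂,a) ∈ G with a > e^{1+3α/2} and |x| ≤ 2L, the integral ∫_G A(y) k₁(y⁻¹x) dλ(y) converges absolutely and | ∫_G A(y) k₁(y⁻¹x) dλ(y) | ≤ C (min(1, L/a))³ / (L² log a). -/

import Mathlib

open Real MeasureTheory Set

noncomputable section

/-- `cosh` of the hyperbolic distance from `p = (x₁, x₂, a)` to the identity `e = (0,0,1)`. -/
def chD (p : ℝ × ℝ × ℝ) : ℝ :=
  (p.2.2 + (p.2.2)⁻¹ + (p.2.2)⁻¹ * (p.1 ^ 2 + p.2.1 ^ 2)) / 2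

/-- The hyperbolic distance `r(p)` from `p` to the identity, i.e. `arcosh (chD p)`. -/
def rD (p : ℝ × ℝ × ℝ) : ℝ := Real.log (chD p + Real.sqrt (chD p ^ 2 - 1))

/-- `|x| = √(x₁² + x₂²)`. -/
def nm (p : ℝ × ℝ × ℝ) : ℝ := Real.sqrt (p.1 ^ 2 + p.2.1 ^ 2)

/-- The kernel `k₁`. -/
def k1 (p : ℝ × ℝ × ℝ) : ℝ :=
  -(2 * Real.pi ^ 2)⁻¹ * (p.2.2)⁻¹ * p.1 *
    (Real.sinh (rD p) + rD p * Real.cosh (rD p)) / (rD p ^ 2 * Real.sinh (rD p) ^ 3)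

/-- The kernel `k₂`. -/
def k2 (p : ℝ × ℝ × ℝ) : ℝ :=
  -(2 * Real.pi ^ 2)⁻¹ * (p.2.2)⁻¹ * p.2.1 *
    (Real.sinh (rD p) + rD p * Real.cosh (rD p)) / (rD p ^ 2 * Real.sinh (rD p) ^ 3)

/-- The kernel `k₀`. -/
def k0 (p : ℝ × ℝ × ℝ) : ℝ :=
  (2 * Real.pi ^ 2)⁻¹ *
    (-(Real.sinh (rD p) + rD p * Real.cosh (rD p)) +
      (p.2.2)⁻¹ * (Real.cosh (rD p) * Real.sinh (rD p) + rD p)) /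
    (rD p ^ 2 * Real.sinh (rD p) ^ 3)

/-- `y⁻¹ · x` in the group `G = ℝ² ⋊ ℝ⁺`. -/
def ginvMul (y x : ℝ × ℝ × ℝ) : ℝ × ℝ × ℝ :=
  ((y.2.2)⁻¹ * (x.1 - y.1), (y.2.2)⁻¹ * (x.2.1 - y.2.1), x.2.2 / y.2.2)

/-- The right Haar measure `ρ`, of density `a⁻¹` w.r.t. Lebesgue measure on `{a > 0}`. -/
def ρG : Measure (ℝ × ℝ × ℝ) :=
  (volume.restrict {p : ℝ × ℝ × ℝ | 0 < p.2.2}).withDensity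
    (fun p => ENNReal.ofReal (p.2.2)⁻¹)

/-- The left Haar measure `λ`, of density `a⁻³` w.r.t. Lebesgue measure on `{a > 0}`. -/
def lG : Measure (ℝ × ℝ × ℝ) :=
  (volume.restrict {p : ℝ × ℝ × ℝ | 0 < p.2.2}).withDensity
    (fun p => ENNReal.ofReal ((p.2.2) ^ 3)⁻¹)

/-- The set `P₀ = [−1,1] × [−1,1] × [e⁻¹, e]`. -/
def P0 : Set (ℝ × ℝ × ℝ) :=
  {p | p.1 ∈ Icc (-1 : ℝ) 1 ∧ p.2.1 ∈ Icc (-1 : ℝ) 1 ∧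
       p.2.2 ∈ Icc (Real.exp (-1)) (Real.exp 1)}

/-- The set `2P₀ = [−2,2] × [−2,2] × [e⁻², e²]`. -/
def twoP0 : Set (ℝ × ℝ × ℝ) :=
  {p | p.1 ∈ Icc (-2 : ℝ) 2 ∧ p.2.1 ∈ Icc (-2 : ℝ) 2 ∧
       p.2.2 ∈ Icc (Real.exp (-2)) (Real.exp 2)}

/-- The set `P_L = [L−1,L+1] × [−1,1] × [e⁻¹, e]`. -/
def PL (L : ℝ) : Set (ℝ × ℝ × ℝ) :=
  {p | p.1 ∈ Icc (L - 1) (L + 1) ∧ p.2.1 ∈ Icc (-1 : ℝ) 1 ∧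
       p.2.2 ∈ Icc (Real.exp (-1)) (Real.exp 1)}

/-- The set `2P_L = [L−2,L+2] × [−2,2] × [e⁻², e²]`. -/
def twoPL (L : ℝ) : Set (ℝ × ℝ × ℝ) :=
  {p | p.1 ∈ Icc (L - 2) (L + 2) ∧ p.2.1 ∈ Icc (-2 : ℝ) 2 ∧
       p.2.2 ∈ Icc (Real.exp (-2)) (Real.exp 2)}

/-- The Calderón–Zygmund set `R = [−L/2,L/2]² × [e^{−α}, e^{α}]`. -/
def Rset (α L : ℝ) : Set (ℝ × ℝ × ℝ) :=
  {p | p.1 ∈ Icc (-L / 2) (L / 2) ∧ p.2.1 ∈ Icc (-L / 2) (L / 2) ∧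
       p.2.2 ∈ Icc (Real.exp (-α)) (Real.exp α)}

open ENNReal

-- measurability
lemma meas_chD : Measurable chD := by
  unfold chD; fun_prop

lemma meas_rD : Measurable rD :=
  Real.measurable_log.comp (meas_chD.add (Real.continuous_sqrt.measurable.comp
    ((meas_chD.pow_const 2).sub measurable_const)))

lemma meas_k1 : Measurable k1 := by
  unfold k1
  have hs : Measurable fun p : ℝ × ℝ × ℝ => Real.sinh (rD p) :=
    Real.continuous_sinh.measurable.comp meas_rD
  have hc : Measurable fun p : ℝ × ℝ × ℝ => Real.cosh (rD p) :=
    Real.continuous_cosh.measurable.comp meas_rD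
  exact ((((measurable_const.mul (measurable_snd.comp measurable_snd).inv).mul
    measurable_fst).mul (hs.add (meas_rD.mul hc))).div
    ((meas_rD.pow_const 2).mul (hs.pow_const 3)))

lemma frac_bound {h r : ℝ} (hh : 2 ≤ h) (hr : 1 ≤ r) (hc : Real.cosh r = h) :
    (Real.sinh r + r * Real.cosh r) / (r ^ 2 * Real.sinh r ^ 3) ≤ 16 / (r * h ^ 2) := by
  have hr0 : (0 : ℝ) < r := by linarith
  have hsq : Real.sinh r ^ 2 = h ^ 2 - 1 := by
    have := Real.cosh_sq r
    nlinarith [this]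
  have hs0 : 0 ≤ Real.sinh r := Real.sinh_nonneg_iff.2 hr0.le
  have hs2 : h / 2 ≤ Real.sinh r := by nlinarith
  have hsh : Real.sinh r ≤ h := by nlinarith
  have hspos : 0 < Real.sinh r := by nlinarith
  have hnum : Real.sinh r + r * Real.cosh r ≤ 2 * r * h := by
    rw [hc]; nlinarith
  have hden : r ^ 2 * (h / 2) ^ 3 ≤ r ^ 2 * Real.sinh r ^ 3 := by
    have := pow_le_pow_left₀ (by positivity) hs2 3
    nlinarith [sq_nonneg r]
  have hdenpos : (0 : ℝ) < r ^ 2 * (h / 2) ^ 3 := by positivity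
  calc (Real.sinh r + r * Real.cosh r) / (r ^ 2 * Real.sinh r ^ 3)
      ≤ (2 * r * h) / (r ^ 2 * (h / 2) ^ 3) :=
        div_le_div₀ (by positivity) hnum hdenpos hden
    _ = 16 / (r * h ^ 2) := by field_simp; ring

lemma cosh_rD {p : ℝ × ℝ × ℝ} (hp : 1 ≤ chD p) : Real.cosh (rD p) = chD p := by
  set h := chD p with hh
  have h1 : (0 : ℝ) ≤ h ^ 2 - 1 := by nlinarith
  have hs0 : 0 ≤ Real.sqrt (h ^ 2 - 1) := Real.sqrt_nonneg _
  have ht : 0 < h + Real.sqrt (h ^ 2 - 1) := by linarith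
  have hsq : Real.sqrt (h ^ 2 - 1) ^ 2 = h ^ 2 - 1 := Real.sq_sqrt h1
  have hinv : (h + Real.sqrt (h ^ 2 - 1))⁻¹ = h - Real.sqrt (h ^ 2 - 1) := by
    refine (eq_inv_of_mul_eq_one_left ?_).symm
    nlinarith
  rw [rD, Real.cosh_log ht, hinv]
  ring

lemma rD_ge {p : ℝ × ℝ × ℝ} (hp : 1 ≤ chD p) : Real.log (chD p) ≤ rD p := by
  apply Real.log_le_log (by linarith)
  have := Real.sqrt_nonneg (chD p ^ 2 - 1)
  linarith

set_option maxHeartbeats 1000000 in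
lemma k1_pointwise {α L : ℝ} (hα : 20 ≤ α) {x y : ℝ × ℝ × ℝ}
    (hx2 : Real.exp (1 + 3 * α / 2) < x.2.2) (hy : y ∈ Rset α L) :
    |k1 (ginvMul y x)| ≤ 192 / Real.pi ^ 2 / Real.log x.2.2 *
      (x.2.2 * |x.1 - y.1| /
        (x.2.2 ^ 2 + ((x.1 - y.1) ^ 2 + (x.2.1 - y.2.1) ^ 2)) ^ 2) * y.2.2 ^ 2 := by
  obtain ⟨hy1, hy2, hy3⟩ := hy
  set a := x.2.2 with ha_def
  set b := y.2.2 with hb_def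
  set s := x.1 - y.1 with hs_def
  set t := x.2.1 - y.2.1 with ht_def
  set d2 := s ^ 2 + t ^ 2 with hd2
  have hd2nn : 0 ≤ d2 := by positivity
  have ha : 0 < a := lt_trans (Real.exp_pos _) hx2
  have hb : 0 < b := lt_of_lt_of_le (Real.exp_pos _) hy3.1
  have hbe : b ≤ Real.exp α := hy3.2
  have hloga : 1 + 3 * α / 2 < Real.log a := (Real.lt_log_iff_exp_lt ha).2 hx2
  have hloga6 : 0 < Real.log a := by linarith
  set p := ginvMul y x with hp
  have hp1 : p.1 = b⁻¹ * s := rfl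
  have hp21 : p.2.1 = b⁻¹ * t := rfl
  have hp22 : p.2.2 = a / b := rfl
  have hch : chD p = (a ^ 2 + b ^ 2 + d2) / (2 * a * b) := by
    rw [chD, hp1, hp21, hp22, hd2]
    field_simp
  have hchQ : (a ^ 2 + d2) / (2 * a * b) ≤ chD p := by
    rw [hch]
    gcongr
    nlinarith
  have hab : a / (2 * b) ≤ chD p := by
    rw [hch, div_le_div_iff₀ (by positivity) (by positivity)]
    nlinarith
  have hexp : Real.exp (1 + α / 2) / 2 ≤ a / (2 * b) := by
    have h1 : Real.exp (1 + 3 * α / 2) / (2 * Real.exp α) ≤ a / (2 * b) :=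
      div_le_div₀ ha.le hx2.le (by positivity) (by linarith)
    have h2 : Real.exp (1 + 3 * α / 2) = Real.exp (1 + α / 2) * Real.exp α := by
      rw [← Real.exp_add]; ring_nf
    rw [h2] at h1
    have he : 0 < Real.exp α := Real.exp_pos _
    calc Real.exp (1 + α / 2) / 2 = Real.exp (1 + α / 2) * Real.exp α / (2 * Real.exp α) := by
          field_simp
      _ ≤ a / (2 * b) := h1
  have hexp4 : (4 : ℝ) ≤ Real.exp (1 + α / 2) := by
    have := Real.add_one_le_exp (1 + α / 2)
    linarith
  have h2 : 2 ≤ chD p := by linarith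
  have hchD1 : 1 ≤ chD p := by linarith
  have hcosh := cosh_rD hchD1
  have hlog2 : Real.log (a / (2 * b)) = Real.log a - (Real.log 2 + Real.log b) := by
    rw [Real.log_div ha.ne' (by positivity), Real.log_mul two_ne_zero hb.ne']
  have hlogb : Real.log b ≤ α := by
    have := Real.log_le_log hb hbe
    rwa [Real.log_exp] at this
  have hlog2' : Real.log 2 < 1 := by
    have := Real.log_two_lt_d9
    linarith
  have hrch : Real.log (a / (2 * b)) ≤ rD p := by
    have h3 := Real.log_le_log (by positivity) hab
    have h4 := rD_ge hchD1
    linarith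
  have hr6 : Real.log a / 6 ≤ rD p := by
    rw [hlog2] at hrch
    linarith
  have hr1 : 1 ≤ rD p := by linarith
  have hfrac := frac_bound h2 hr1 hcosh
  set N := Real.sinh (rD p) + rD p * Real.cosh (rD p) with hN
  set D := rD p ^ 2 * Real.sinh (rD p) ^ 3 with hD
  have hsnn : 0 ≤ Real.sinh (rD p) := Real.sinh_nonneg_iff.2 (by linarith)
  have hcnn : 0 ≤ Real.cosh (rD p) := (Real.cosh_pos _).le
  have hNnn : 0 ≤ N := by positivity
  have hDnn : 0 ≤ D := by positivity
  have hNDnn : 0 ≤ N / D := div_nonneg hNnn hDnn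
  have hk : k1 p = -(2 * π ^ 2)⁻¹ * (s / a) * (N / D) := by
    rw [k1, hp1, hp22, mul_div_assoc]
    congr 1
    field_simp
  have habs : |k1 p| = (2 * π ^ 2)⁻¹ * (|s| / a) * (N / D) := by
    rw [hk, abs_mul, abs_mul, abs_of_nonneg hNDnn, abs_neg,
      abs_of_nonneg (by positivity : (0:ℝ) ≤ (2 * π ^ 2)⁻¹), abs_div, abs_of_pos ha]
  have hQ2 : ((a ^ 2 + d2) / (2 * a * b)) ^ 2 ≤ chD p ^ 2 :=
    pow_le_pow_left₀ (by positivity) hchQ 2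
  have hlow : Real.log a / 6 * ((a ^ 2 + d2) / (2 * a * b)) ^ 2 ≤ rD p * chD p ^ 2 :=
    mul_le_mul hr6 hQ2 (by positivity) (by linarith)
  have hfrac2 : (16 : ℝ) / (rD p * chD p ^ 2) ≤
      16 / (Real.log a / 6 * ((a ^ 2 + d2) / (2 * a * b)) ^ 2) := by
    gcongr
  have hfinal : (2 * π ^ 2)⁻¹ * (|s| / a) *
      (16 / (Real.log a / 6 * ((a ^ 2 + d2) / (2 * a * b)) ^ 2)) =
      192 / Real.pi ^ 2 / Real.log a * (a * |s| / (a ^ 2 + d2) ^ 2) * b ^ 2 := by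
    have hpi := Real.pi_ne_zero
    have had2 : (0:ℝ) < a ^ 2 + d2 := by positivity
    field_simp
    ring
  calc |k1 p| = (2 * π ^ 2)⁻¹ * (|s| / a) * (N / D) := habs
    _ ≤ (2 * π ^ 2)⁻¹ * (|s| / a) * (16 / (rD p * chD p ^ 2)) := by
        apply mul_le_mul_of_nonneg_left hfrac (by positivity)
    _ ≤ (2 * π ^ 2)⁻¹ * (|s| / a) *
        (16 / (Real.log a / 6 * ((a ^ 2 + d2) / (2 * a * b)) ^ 2)) := by
        apply mul_le_mul_of_nonneg_left hfrac2 (by positivity)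
    _ = 192 / Real.pi ^ 2 / Real.log a * (a * |s| / (a ^ 2 + d2) ^ 2) * b ^ 2 := hfinal

lemma lint_inv_shift (m c : ℝ) (hm : 0 < m) :
    ∫⁻ t : ℝ, ENNReal.ofReal ((m ^ 2 + (c - t) ^ 2)⁻¹) = ENNReal.ofReal (π / m) := by
  have hrw : (fun t : ℝ => (m ^ 2 + t ^ 2)⁻¹) =
      fun t : ℝ => (m ^ 2)⁻¹ * (1 + (t / m) ^ 2)⁻¹ := by
    funext t
    rw [← mul_inv]
    congr 1
    field_simp
  have h1 : Integrable (fun t : ℝ => (1 + (t / m) ^ 2)⁻¹) :=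
    (integrable_comp_div_iff (fun u : ℝ => (1 + u ^ 2)⁻¹) hm.ne').2 integrable_inv_one_add_sq
  have hbase : Integrable (fun t : ℝ => (m ^ 2 + t ^ 2)⁻¹) := by
    rw [hrw]; exact h1.const_mul _
  have hvalbase : ∫ t : ℝ, (m ^ 2 + t ^ 2)⁻¹ = π / m := by
    rw [hrw, MeasureTheory.integral_const_mul,
      Measure.integral_comp_div (fun u : ℝ => (1 + u ^ 2)⁻¹) m,
      integral_univ_inv_one_add_sq, abs_of_pos hm, smul_eq_mul]
    field_simp
  have hshift : Integrable (fun t : ℝ => (m ^ 2 + (c - t) ^ 2)⁻¹) :=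
    (hbase.comp_sub_left c : )
  have hvalshift : ∫ t : ℝ, (m ^ 2 + (c - t) ^ 2)⁻¹ = π / m := by
    rw [integral_sub_left_eq_self (fun t : ℝ => (m ^ 2 + t ^ 2)⁻¹) volume c]
    exact hvalbase
  rw [← ofReal_integral_eq_lintegral_ofReal hshift
    (Filter.Eventually.of_forall fun t => by positivity), hvalshift]

lemma lint_b {α : ℝ} (hα : 0 < α) :
    ∫⁻ b : ℝ, (Icc (Real.exp (-α)) (Real.exp α)).indicator
      (fun b => ENNReal.ofReal b⁻¹) b = ENNReal.ofReal (2 * α) := by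
  have hle : Real.exp (-α) ≤ Real.exp α := Real.exp_le_exp.2 (by linarith)
  have hInt : IntegrableOn (fun b : ℝ => b⁻¹) (Icc (Real.exp (-α)) (Real.exp α)) := by
    apply ContinuousOn.integrableOn_Icc
    intro z hz
    exact (continuousAt_inv₀ (ne_of_gt (lt_of_lt_of_le (Real.exp_pos _) hz.1))).continuousWithinAt
  rw [lintegral_indicator measurableSet_Icc,
    ← ofReal_integral_eq_lintegral_ofReal hInt
      ((ae_restrict_iff' measurableSet_Icc).2 (Filter.Eventually.of_forall fun b hb =>
        inv_nonneg.2 (le_trans (Real.exp_pos _).le hb.1)))]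
  congr 1
  rw [MeasureTheory.integral_Icc_eq_integral_Ioc,
    ← intervalIntegral.integral_of_le hle, integral_inv]
  · rw [← Real.exp_sub, Real.log_exp]
    ring
  · exact Set.notMem_uIcc_of_lt (Real.exp_pos _) (Real.exp_pos _)

lemma lint3_iter (F : ℝ × ℝ × ℝ → ℝ≥0∞) (hF : Measurable F) :
    ∫⁻ y : ℝ × ℝ × ℝ, F y = ∫⁻ s : ℝ, ∫⁻ u : ℝ, ∫⁻ c : ℝ, F (s, u, c) := by
  rw [MeasureTheory.Measure.volume_eq_prod _ _, lintegral_prod _ hF.aemeasurable]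
  apply lintegral_congr
  intro s
  rw [MeasureTheory.Measure.volume_eq_prod _ _]
  exact lintegral_prod _ ((hF.comp measurable_prodMk_left).aemeasurable)

lemma lint3_prod (f g h : ℝ → ℝ≥0∞) (hf : Measurable f) (hg : Measurable g)
    (hh : Measurable h) :
    ∫⁻ y : ℝ × ℝ × ℝ, f y.1 * g y.2.1 * h y.2.2 =
      (∫⁻ s, f s) * (∫⁻ s, g s) * (∫⁻ s, h s) := by
  rw [lint3_iter (fun y => f y.1 * g y.2.1 * h y.2.2) (((hf.comp measurable_fst).mul
    (hg.comp (measurable_fst.comp measurable_snd))).mul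
    (hh.comp (measurable_snd.comp measurable_snd)))]
  have h1 : ∀ s u : ℝ, ∫⁻ c, f s * g u * h c = f s * g u * ∫⁻ c, h c := fun s u =>
    lintegral_const_mul _ hh
  simp_rw [h1]
  have h2 : ∀ s : ℝ, (∫⁻ u, f s * g u * ∫⁻ c, h c) = (f s * ∫⁻ c, h c) * ∫⁻ u, g u := by
    intro s
    rw [show (fun u => f s * g u * ∫⁻ c, h c) = fun u => (f s * ∫⁻ c, h c) * g u from
      funext fun u => by ring, lintegral_const_mul _ hg]
  simp_rw [h2]
  rw [lintegral_mul_const _ (hf.mul_const _), lintegral_mul_const _ hf]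
  ring

set_option maxHeartbeats 1000000 in
/-- for a large atom `A` and `x ∈ Ω₃` with `|x| ≤ 2L`,
`|R₁A(x)| ≲ (min(1, L/a))³ / (L² log a)`. -/
theorem stmt19 :
    ∃ C : ℝ, 0 < C ∧
      ∀ α L : ℝ, 20 ≤ α → Real.exp (2 * α) ≤ L → L < Real.exp (8 * α) →
      ∀ A : ℝ × ℝ × ℝ → ℂ, Measurable A →
        (∀ y, y ∉ Rset α L → A y = 0) →
        (∀ y, ‖A y‖ ≤ (2 * α * L ^ 2)⁻¹) →
      ∀ x : ℝ × ℝ × ℝ, Real.exp (1 + 3 * α / 2) < x.2.2 → nm x ≤ 2 * L →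
        Integrable (fun y => A y * (k1 (ginvMul y x) : ℂ)) lG ∧
        ‖∫ y, A y * (k1 (ginvMul y x) : ℂ) ∂lG‖ ≤
          C * (min 1 (L / x.2.2)) ^ 3 / (L ^ 2 * Real.log x.2.2) := by
  refine ⟨200, by norm_num, ?_⟩
  intro α L hα hL1 hL2 A hA hsupp hbound x hx2 hxnm
  have hα0 : (0:ℝ) < α := by linarith
  have hL0 : 0 < L := lt_of_lt_of_le (Real.exp_pos _) hL1
  have ha : 0 < x.2.2 := lt_trans (Real.exp_pos _) hx2
  have hloga : 1 + 3 * α / 2 < Real.log x.2.2 := (Real.lt_log_iff_exp_lt ha).2 hx2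
  have hloga0 : 0 < Real.log x.2.2 := by linarith
  set a := x.2.2 with ha_def
  set f : ℝ × ℝ × ℝ → ℂ := fun y => A y * (k1 (ginvMul y x) : ℂ) with hf_def
  have hgm : Measurable fun y : ℝ × ℝ × ℝ => ginvMul y x := by
    unfold ginvMul
    fun_prop
  have hfmeas : Measurable f := hA.mul (Complex.measurable_ofReal.comp (meas_k1.comp hgm))
  have hmin0 : (0:ℝ) ≤ min 1 (L / a) := le_min zero_le_one (by positivity)
  have htgt0 : (0:ℝ) ≤ 200 * min 1 (L / a) ^ 3 / (L ^ 2 * Real.log a) := by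
    apply div_nonneg _ (by positivity)
    have := pow_nonneg hmin0 3
    linarith
  have hx1 : |x.1| ≤ 2 * L := by
    have h1 : |x.1| = Real.sqrt (x.1 ^ 2) := (Real.sqrt_sq_eq_abs _).symm
    have h2 : Real.sqrt (x.1 ^ 2) ≤ Real.sqrt (x.1 ^ 2 + x.2.1 ^ 2) :=
      Real.sqrt_le_sqrt (by nlinarith [sq_nonneg x.2.1])
    calc |x.1| ≤ nm x := by rw [h1, nm]; exact h2
      _ ≤ 2 * L := hxnm
  have hnorm : ∀ y ∈ Rset α L, ‖f y‖ ≤ (2 * α * L ^ 2)⁻¹ *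
      (192 / Real.pi ^ 2 / Real.log a *
        (a * |x.1 - y.1| / (a ^ 2 + ((x.1 - y.1) ^ 2 + (x.2.1 - y.2.1) ^ 2)) ^ 2) *
        y.2.2 ^ 2) := by
    intro y hy
    rw [hf_def]
    simp only
    rw [norm_mul, Complex.norm_real, Real.norm_eq_abs]
    exact mul_le_mul (hbound y) (k1_pointwise hα hx2 hy) (abs_nonneg _) (by positivity)
  have hw : Measurable fun p : ℝ × ℝ × ℝ => ENNReal.ofReal ((p.2.2 ^ 3)⁻¹) :=
    ENNReal.measurable_ofReal.comp ((measurable_snd.comp measurable_snd).pow_const 3).inv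
  have hred : ∫⁻ y, (‖f y‖₊ : ℝ≥0∞) ∂lG ≤
      ∫⁻ y, ENNReal.ofReal ((y.2.2 ^ 3)⁻¹) * (‖f y‖₊ : ℝ≥0∞) := by
    rw [lG, lintegral_withDensity_eq_lintegral_mul _ hw hfmeas.nnnorm.coe_nnreal_ennreal]
    exact lintegral_mono' Measure.restrict_le_self le_rfl
  have key2 : ∫⁻ y, ENNReal.ofReal ((y.2.2 ^ 3)⁻¹) * (‖f y‖₊ : ℝ≥0∞) ≤
      ENNReal.ofReal (200 * min 1 (L / a) ^ 3 / (L ^ 2 * Real.log a)) := by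
    rcases le_or_gt L a with hcase | hcase
    · -- a ≥ L
      set c1 : ℝ := (2 * α * L ^ 2)⁻¹ * (192 / Real.pi ^ 2 / Real.log a) *
        (5 * L / (2 * a ^ 3)) with hc1
      have hc1nn : 0 ≤ c1 := by positivity
      set I1 : ℝ → ℝ≥0∞ := fun c => (Icc (-L / 2) (L / 2)).indicator (fun _ => 1) c with hI1
      set I3 : ℝ → ℝ≥0∞ := fun c => ENNReal.ofReal c1 *
          (Icc (Real.exp (-α)) (Real.exp α)).indicator (fun b => ENNReal.ofReal b⁻¹) c with hI3
      have hI1m : Measurable I1 := measurable_const.indicator measurableSet_Icc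
      have hI3m : Measurable I3 := measurable_const.mul
        ((ENNReal.measurable_ofReal.comp measurable_inv).indicator measurableSet_Icc)
      have hptw : ∀ y : ℝ × ℝ × ℝ, ENNReal.ofReal ((y.2.2 ^ 3)⁻¹) * (‖f y‖₊ : ℝ≥0∞) ≤
          I1 y.1 * I1 y.2.1 * I3 y.2.2 := by
        intro y
        by_cases hy : y ∈ Rset α L
        · obtain ⟨h1, h2, h3⟩ := hy
          have hb : 0 < y.2.2 := lt_of_lt_of_le (Real.exp_pos _) h3.1
          have hrhs : I1 y.1 * I1 y.2.1 * I3 y.2.2 =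
              ENNReal.ofReal (c1 * (y.2.2)⁻¹) := by
            rw [hI1, hI3]
            simp only [indicator_of_mem h1, indicator_of_mem h2, indicator_of_mem h3]
            rw [ENNReal.ofReal_mul hc1nn]
            ring
          rw [hrhs, ← enorm_eq_nnnorm, ← ofReal_norm, ← ENNReal.ofReal_mul (by positivity)]
          apply ENNReal.ofReal_le_ofReal
          have hk := hnorm y ⟨h1, h2, h3⟩
          have hs1 : |x.1 - y.1| ≤ 5 * L / 2 := by
            have hy1a : |y.1| ≤ L / 2 := abs_le.2 ⟨by linarith [h1.1], h1.2⟩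
            calc |x.1 - y.1| ≤ |x.1| + |y.1| := by
                  rw [sub_eq_add_neg]
                  exact (abs_add_le _ _).trans (by rw [abs_neg])
              _ ≤ 5 * L / 2 := by linarith
          have hden : (a ^ 2) ^ 2 ≤
              (a ^ 2 + ((x.1 - y.1) ^ 2 + (x.2.1 - y.2.1) ^ 2)) ^ 2 := by
            apply pow_le_pow_left₀ (by positivity)
            nlinarith [sq_nonneg (x.1 - y.1), sq_nonneg (x.2.1 - y.2.1)]
          have hψ : a * |x.1 - y.1| / (a ^ 2 + ((x.1 - y.1) ^ 2 + (x.2.1 - y.2.1) ^ 2)) ^ 2 ≤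
              5 * L / (2 * a ^ 3) := by
            have hd1 : a * |x.1 - y.1| / (a ^ 2 + ((x.1 - y.1) ^ 2 + (x.2.1 - y.2.1) ^ 2)) ^ 2 ≤
                a * (5 * L / 2) / (a ^ 2) ^ 2 :=
              div_le_div₀ (by positivity)
                (mul_le_mul_of_nonneg_left hs1 ha.le) (by positivity) hden
            have hd2 : a * (5 * L / 2) / (a ^ 2) ^ 2 = 5 * L / (2 * a ^ 3) := by
              field_simp
            linarith
          have hstep1 : (y.2.2 ^ 3)⁻¹ * ‖f y‖ ≤ (y.2.2 ^ 3)⁻¹ * ((2 * α * L ^ 2)⁻¹ *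
              (192 / Real.pi ^ 2 / Real.log a *
                (a * |x.1 - y.1| / (a ^ 2 + ((x.1 - y.1) ^ 2 + (x.2.1 - y.2.1) ^ 2)) ^ 2) *
                y.2.2 ^ 2)) :=
            mul_le_mul_of_nonneg_left hk (by positivity)
          have hstep2 : (y.2.2 ^ 3)⁻¹ * ((2 * α * L ^ 2)⁻¹ *
              (192 / Real.pi ^ 2 / Real.log a *
                (a * |x.1 - y.1| / (a ^ 2 + ((x.1 - y.1) ^ 2 + (x.2.1 - y.2.1) ^ 2)) ^ 2) *
                y.2.2 ^ 2)) = ((2 * α * L ^ 2)⁻¹ * (192 / Real.pi ^ 2 / Real.log a) *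
                (a * |x.1 - y.1| / (a ^ 2 + ((x.1 - y.1) ^ 2 + (x.2.1 - y.2.1) ^ 2)) ^ 2)) *
                (y.2.2)⁻¹ := by
            field_simp
          have hstep3 : (2 * α * L ^ 2)⁻¹ * (192 / Real.pi ^ 2 / Real.log a) *
              (a * |x.1 - y.1| / (a ^ 2 + ((x.1 - y.1) ^ 2 + (x.2.1 - y.2.1) ^ 2)) ^ 2) ≤ c1 := by
            rw [hc1]
            exact mul_le_mul_of_nonneg_left hψ (by positivity)
          calc (y.2.2 ^ 3)⁻¹ * ‖f y‖ ≤ _ := hstep1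
            _ = _ := hstep2
            _ ≤ c1 * (y.2.2)⁻¹ := mul_le_mul_of_nonneg_right hstep3 (by positivity)
        · have hz : f y = 0 := by rw [hf_def]; simp [hsupp y hy]
          rw [hz]
          simp
      have hI1int : ∫⁻ s, I1 s = ENNReal.ofReal L := by
        rw [hI1]
        simp only
        rw [lintegral_indicator_const measurableSet_Icc, Real.volume_Icc, one_mul]
        congr 1
        ring
      have hI3int : ∫⁻ s, I3 s = ENNReal.ofReal c1 * ENNReal.ofReal (2 * α) := by
        rw [hI3]
        simp only
        have hmb : Measurable fun b : ℝ => ENNReal.ofReal b⁻¹ :=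
          ENNReal.measurable_ofReal.comp measurable_inv
        rw [lintegral_const_mul _ (hmb.indicator measurableSet_Icc), lint_b hα0]
      calc ∫⁻ y, ENNReal.ofReal ((y.2.2 ^ 3)⁻¹) * (‖f y‖₊ : ℝ≥0∞)
          ≤ ∫⁻ y : ℝ × ℝ × ℝ, I1 y.1 * I1 y.2.1 * I3 y.2.2 := lintegral_mono hptw
        _ = (∫⁻ s, I1 s) * (∫⁻ s, I1 s) * (∫⁻ s, I3 s) := lint3_prod _ _ _ hI1m hI1m hI3m
        _ = ENNReal.ofReal (L * L * (c1 * (2 * α))) := by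
            rw [hI1int, hI3int, ← ENNReal.ofReal_mul hc1nn, ← ENNReal.ofReal_mul hL0.le,
              ← ENNReal.ofReal_mul (by positivity)]
        _ ≤ ENNReal.ofReal (200 * min 1 (L / a) ^ 3 / (L ^ 2 * Real.log a)) := by
            apply ENNReal.ofReal_le_ofReal
            rw [min_eq_right ((div_le_one ha).2 hcase), hc1]
            have hval : L * L * ((2 * α * L ^ 2)⁻¹ * (192 / Real.pi ^ 2 / Real.log a) *
                (5 * L / (2 * a ^ 3)) * (2 * α)) =
                480 / Real.pi ^ 2 * (L / (a ^ 3 * Real.log a)) := by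
              field_simp
              ring
            have htv : 200 * (L / a) ^ 3 / (L ^ 2 * Real.log a) =
                200 * (L / (a ^ 3 * Real.log a)) := by
              field_simp
            rw [hval, htv]
            have hple : 480 / Real.pi ^ 2 ≤ 200 := by
              rw [div_le_iff₀ (by positivity)]
              nlinarith [Real.pi_gt_three]
            exact mul_le_mul_of_nonneg_right hple (by positivity)
    · -- a < L
      set c0 : ℝ := (2 * α * L ^ 2)⁻¹ * (192 / Real.pi ^ 2 / Real.log a) with hc0
      have hc0nn : 0 ≤ c0 := by positivity
      set Φ : ℝ → ℝ → ℝ≥0∞ := fun s u => ENNReal.ofReal (c0 * (a * |x.1 - s| /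
          (a ^ 2 + ((x.1 - s) ^ 2 + (x.2.1 - u) ^ 2)) ^ 2)) with hΦ
      have hmb : Measurable fun b : ℝ => ENNReal.ofReal b⁻¹ :=
        ENNReal.measurable_ofReal.comp measurable_inv
      set ind : ℝ → ℝ≥0∞ := fun c => (Icc (Real.exp (-α)) (Real.exp α)).indicator
          (fun b => ENNReal.ofReal b⁻¹) c with hind
      have hindm : Measurable ind := hmb.indicator measurableSet_Icc
      have hψm : Measurable fun z : ℝ × ℝ => c0 * (a * |x.1 - z.1| /
          (a ^ 2 + ((x.1 - z.1) ^ 2 + (x.2.1 - z.2) ^ 2)) ^ 2) := by fun_prop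
      have hΦm : Measurable fun z : ℝ × ℝ => Φ z.1 z.2 :=
        ENNReal.measurable_ofReal.comp hψm
      have hG2m : Measurable fun y : ℝ × ℝ × ℝ => Φ y.1 y.2.1 * ind y.2.2 :=
        (hΦm.comp (measurable_fst.prodMk (measurable_fst.comp measurable_snd))).mul
          (hindm.comp (measurable_snd.comp measurable_snd))
      have hptw : ∀ y : ℝ × ℝ × ℝ, ENNReal.ofReal ((y.2.2 ^ 3)⁻¹) * (‖f y‖₊ : ℝ≥0∞) ≤
          Φ y.1 y.2.1 * ind y.2.2 := by
        intro y
        by_cases hy : y ∈ Rset α L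
        · obtain ⟨h1, h2, h3⟩ := hy
          have hb : 0 < y.2.2 := lt_of_lt_of_le (Real.exp_pos _) h3.1
          have hψnn : (0:ℝ) ≤ c0 * (a * |x.1 - y.1| /
              (a ^ 2 + ((x.1 - y.1) ^ 2 + (x.2.1 - y.2.1) ^ 2)) ^ 2) := by positivity
          have hrhs : Φ y.1 y.2.1 * ind y.2.2 = ENNReal.ofReal
              (c0 * (a * |x.1 - y.1| /
                (a ^ 2 + ((x.1 - y.1) ^ 2 + (x.2.1 - y.2.1) ^ 2)) ^ 2) * (y.2.2)⁻¹) := by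
            rw [hΦ, hind]
            simp only [indicator_of_mem h3]
            rw [ENNReal.ofReal_mul hψnn]
          rw [hrhs, ← enorm_eq_nnnorm, ← ofReal_norm, ← ENNReal.ofReal_mul (by positivity)]
          apply ENNReal.ofReal_le_ofReal
          have hk := hnorm y ⟨h1, h2, h3⟩
          have hstep1 : (y.2.2 ^ 3)⁻¹ * ‖f y‖ ≤ (y.2.2 ^ 3)⁻¹ * ((2 * α * L ^ 2)⁻¹ *
              (192 / Real.pi ^ 2 / Real.log a *
                (a * |x.1 - y.1| / (a ^ 2 + ((x.1 - y.1) ^ 2 + (x.2.1 - y.2.1) ^ 2)) ^ 2) *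
                y.2.2 ^ 2)) :=
            mul_le_mul_of_nonneg_left hk (by positivity)
          have hstep2 : (y.2.2 ^ 3)⁻¹ * ((2 * α * L ^ 2)⁻¹ *
              (192 / Real.pi ^ 2 / Real.log a *
                (a * |x.1 - y.1| / (a ^ 2 + ((x.1 - y.1) ^ 2 + (x.2.1 - y.2.1) ^ 2)) ^ 2) *
                y.2.2 ^ 2)) = c0 * (a * |x.1 - y.1| /
                (a ^ 2 + ((x.1 - y.1) ^ 2 + (x.2.1 - y.2.1) ^ 2)) ^ 2) * (y.2.2)⁻¹ := by
            rw [hc0]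
            field_simp
          linarith
        · have hz : f y = 0 := by rw [hf_def]; simp [hsupp y hy]
          rw [hz]
          simp
      have hindint : ∫⁻ c, ind c = ENNReal.ofReal (2 * α) := by
        rw [hind]; exact lint_b hα0
      calc ∫⁻ y, ENNReal.ofReal ((y.2.2 ^ 3)⁻¹) * (‖f y‖₊ : ℝ≥0∞)
          ≤ ∫⁻ y : ℝ × ℝ × ℝ, Φ y.1 y.2.1 * ind y.2.2 := lintegral_mono hptw
        _ = ∫⁻ s, ∫⁻ u, ∫⁻ c, Φ s u * ind c :=
            lint3_iter (fun y => Φ y.1 y.2.1 * ind y.2.2) hG2m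
        _ = ∫⁻ s, ∫⁻ u, Φ s u * ENNReal.ofReal (2 * α) := by
            apply lintegral_congr
            intro s
            apply lintegral_congr
            intro u
            rw [lintegral_const_mul _ hindm, hindint]
        _ ≤ ∫⁻ s, ENNReal.ofReal (c0 * Real.pi * a * ((a ^ 2 + (x.1 - s) ^ 2)⁻¹)) *
              ENNReal.ofReal (2 * α) := by
            apply lintegral_mono
            intro s
            have hΦsm : Measurable (Φ s) :=
              ENNReal.measurable_ofReal.comp (by fun_prop)
            refine le_trans (le_of_eq (lintegral_mul_const _ hΦsm))
              (mul_le_mul_left ?_ _)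
            have hP : (0:ℝ) < a ^ 2 + (x.1 - s) ^ 2 := by positivity
            have hsq : Real.sqrt (a ^ 2 + (x.1 - s) ^ 2) ^ 2 = a ^ 2 + (x.1 - s) ^ 2 :=
              Real.sq_sqrt hP.le
            have hspos : 0 < Real.sqrt (a ^ 2 + (x.1 - s) ^ 2) := Real.sqrt_pos.2 hP
            have hpt : ∀ u : ℝ, Φ s u ≤
                ENNReal.ofReal (c0 * (a * |x.1 - s| / (a ^ 2 + (x.1 - s) ^ 2))) *
                ENNReal.ofReal ((Real.sqrt (a ^ 2 + (x.1 - s) ^ 2) ^ 2 +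
                  (x.2.1 - u) ^ 2)⁻¹) := by
              intro u
              rw [hΦ, ← ENNReal.ofReal_mul (by positivity)]
              apply ENNReal.ofReal_le_ofReal
              rw [hsq]
              have hkey : a * |x.1 - s| / (a ^ 2 + ((x.1 - s) ^ 2 + (x.2.1 - u) ^ 2)) ^ 2 ≤
                  a * |x.1 - s| / (a ^ 2 + (x.1 - s) ^ 2) *
                    (a ^ 2 + (x.1 - s) ^ 2 + (x.2.1 - u) ^ 2)⁻¹ := by
                have hX : a ^ 2 + ((x.1 - s) ^ 2 + (x.2.1 - u) ^ 2) =
                    a ^ 2 + (x.1 - s) ^ 2 + (x.2.1 - u) ^ 2 := by ring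
                rw [hX, ← div_eq_mul_inv, div_div]
                apply div_le_div_of_nonneg_left (by positivity) (by positivity)
                nlinarith [sq_nonneg (x.2.1 - u)]
              calc c0 * (a * |x.1 - s| /
                    (a ^ 2 + ((x.1 - s) ^ 2 + (x.2.1 - u) ^ 2)) ^ 2)
                  ≤ c0 * (a * |x.1 - s| / (a ^ 2 + (x.1 - s) ^ 2) *
                    (a ^ 2 + (x.1 - s) ^ 2 + (x.2.1 - u) ^ 2)⁻¹) :=
                    mul_le_mul_of_nonneg_left hkey hc0nn
                _ = c0 * (a * |x.1 - s| / (a ^ 2 + (x.1 - s) ^ 2)) *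
                    (a ^ 2 + (x.1 - s) ^ 2 + (x.2.1 - u) ^ 2)⁻¹ := by ring
              -- note: goal after rw [hsq] should match up to the hX rearrangement
            have hmu : Measurable fun u : ℝ => ENNReal.ofReal
                ((Real.sqrt (a ^ 2 + (x.1 - s) ^ 2) ^ 2 + (x.2.1 - u) ^ 2)⁻¹) :=
              ENNReal.measurable_ofReal.comp (by fun_prop)
            calc ∫⁻ u, Φ s u
                ≤ ∫⁻ u, ENNReal.ofReal (c0 * (a * |x.1 - s| / (a ^ 2 + (x.1 - s) ^ 2))) *
                  ENNReal.ofReal ((Real.sqrt (a ^ 2 + (x.1 - s) ^ 2) ^ 2 +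
                    (x.2.1 - u) ^ 2)⁻¹) := lintegral_mono hpt
              _ = ENNReal.ofReal (c0 * (a * |x.1 - s| / (a ^ 2 + (x.1 - s) ^ 2))) *
                  ENNReal.ofReal (π / Real.sqrt (a ^ 2 + (x.1 - s) ^ 2)) := by
                  rw [lintegral_const_mul _ hmu,
                    lint_inv_shift (Real.sqrt (a ^ 2 + (x.1 - s) ^ 2)) x.2.1 hspos]
              _ = ENNReal.ofReal (c0 * (a * |x.1 - s| / (a ^ 2 + (x.1 - s) ^ 2)) *
                  (π / Real.sqrt (a ^ 2 + (x.1 - s) ^ 2))) :=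
                  (ENNReal.ofReal_mul (by positivity)).symm
              _ ≤ ENNReal.ofReal (c0 * Real.pi * a * ((a ^ 2 + (x.1 - s) ^ 2)⁻¹)) := by
                  apply ENNReal.ofReal_le_ofReal
                  have hq : |x.1 - s| ≤ Real.sqrt (a ^ 2 + (x.1 - s) ^ 2) := by
                    rw [← Real.sqrt_sq_eq_abs]
                    exact Real.sqrt_le_sqrt (by nlinarith)
                  have h1 : c0 * (a * |x.1 - s| / (a ^ 2 + (x.1 - s) ^ 2)) *
                      (π / Real.sqrt (a ^ 2 + (x.1 - s) ^ 2)) =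
                      c0 * Real.pi * a * ((a ^ 2 + (x.1 - s) ^ 2)⁻¹) *
                      (|x.1 - s| / Real.sqrt (a ^ 2 + (x.1 - s) ^ 2)) := by
                    field_simp
                  have h2 : |x.1 - s| / Real.sqrt (a ^ 2 + (x.1 - s) ^ 2) ≤ 1 :=
                    div_le_one_of_le₀ hq (Real.sqrt_nonneg _)
                  calc c0 * (a * |x.1 - s| / (a ^ 2 + (x.1 - s) ^ 2)) *
                      (π / Real.sqrt (a ^ 2 + (x.1 - s) ^ 2))
                      = c0 * Real.pi * a * ((a ^ 2 + (x.1 - s) ^ 2)⁻¹) *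
                        (|x.1 - s| / Real.sqrt (a ^ 2 + (x.1 - s) ^ 2)) := h1
                    _ ≤ c0 * Real.pi * a * ((a ^ 2 + (x.1 - s) ^ 2)⁻¹) * 1 :=
                        mul_le_mul_of_nonneg_left h2 (by positivity)
                    _ = c0 * Real.pi * a * ((a ^ 2 + (x.1 - s) ^ 2)⁻¹) := mul_one _
        _ = ENNReal.ofReal (c0 * Real.pi * a) * ENNReal.ofReal (π / a) *
              ENNReal.ofReal (2 * α) := by
            have hms : Measurable fun s : ℝ => ENNReal.ofReal
                ((a ^ 2 + (x.1 - s) ^ 2)⁻¹) :=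
              ENNReal.measurable_ofReal.comp (by fun_prop)
            have hsplit : ∀ s : ℝ, ENNReal.ofReal (c0 * Real.pi * a *
                ((a ^ 2 + (x.1 - s) ^ 2)⁻¹)) = ENNReal.ofReal (c0 * Real.pi * a) *
                ENNReal.ofReal ((a ^ 2 + (x.1 - s) ^ 2)⁻¹) := fun s =>
              ENNReal.ofReal_mul (by positivity)
            simp_rw [hsplit]
            rw [lintegral_mul_const _ (hms.const_mul _), lintegral_const_mul _ hms,
              lint_inv_shift a x.1 ha]
        _ = ENNReal.ofReal (c0 * Real.pi * a * (π / a) * (2 * α)) := by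
            rw [← ENNReal.ofReal_mul (by positivity), ← ENNReal.ofReal_mul (by positivity)]
        _ ≤ ENNReal.ofReal (200 * min 1 (L / a) ^ 3 / (L ^ 2 * Real.log a)) := by
            apply ENNReal.ofReal_le_ofReal
            rw [min_eq_left ((one_le_div ha).2 hcase.le), one_pow, mul_one, hc0]
            have hval : (2 * α * L ^ 2)⁻¹ * (192 / Real.pi ^ 2 / Real.log a) *
                Real.pi * a * (π / a) * (2 * α) = 192 / (L ^ 2 * Real.log a) := by
              field_simp
            rw [hval]
            exact (div_le_div_iff_of_pos_right (by positivity)).2 (by norm_num)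
  have key := le_trans hred key2
  constructor
  · exact ⟨hfmeas.aestronglyMeasurable, lt_of_le_of_lt key ENNReal.ofReal_lt_top⟩
  · calc ‖∫ y, f y ∂lG‖ ≤ (∫⁻ y, ENNReal.ofReal ‖f y‖ ∂lG).toReal :=
        norm_integral_le_lintegral_norm _
      _ ≤ 200 * min 1 (L / a) ^ 3 / (L ^ 2 * Real.log a) := by
        simp_rw [ofReal_norm, enorm_eq_nnnorm]
        have h2 := ENNReal.toReal_mono ENNReal.ofReal_ne_top key
        rwa [ENNReal.toReal_ofReal htgt0] at h2
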